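/- arXiv:2311.13679 — 6 statements merged into one kernel-verified Lean document; each statement's English description precedes it below -/
import Mathlib

section
/- Let m ≥ 1 and define the 'Trojan horse' function h : {−1,1}^{2m} → {−1,1} by h(x) = ∏_{i=1}^m x_i if x_{m+1} = x_{m+2} = ⋯ = x_{2m} = 1, and h(x) = 1 otherwise. Then the Fourier coefficients of h are: ĥ(∅) = 1 − 2^{−m}; ĥ(S) = 2^{−m} for every S ⊆ [2m] with {1,…,m} ⊆ S; ĥ(S) = −2^{−m} for every nonempty S ⊆ {m+1,…,2m}; and ĥ(S) = 0 for all other S ⊆ [2m]. -/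
open scoped Classical

noncomputable section

/-- A `±1` bit, encoded as a unit of `ℤ`. -/
abbrev Bit := ℤˣ

/-- Fourier coefficient `f̂(S) = E_x[f(x) χ_S(x)]`. -/
def walshCoeff {n : ℕ} (f : (Fin n → Bit) → ℝ) (S : Finset (Fin n)) : ℝ :=
  (∑ x : Fin n → Bit, f x * ∏ i ∈ S, ((x i : ℤ) : ℝ)) / 2 ^ n

/-- The first half `{1, …, m}` of the coordinates of `[2m]`. -/
def firstHalf (m : ℕ) : Finset (Fin (2 * m)) :=
  Finset.univ.filter fun i => (i : ℕ) < m

/-- The second half `{m+1, …, 2m}` of the coordinates of `[2m]`. -/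
def secondHalf (m : ℕ) : Finset (Fin (2 * m)) :=
  Finset.univ.filter fun i => m ≤ (i : ℕ)

/-- The "Trojan horse" function: `h(x) = ∏_{i=1}^m x_i` if `x_{m+1} = ⋯ = x_{2m} = 1`,
and `h(x) = 1` otherwise. -/
def trojan (m : ℕ) (x : Fin (2 * m) → Bit) : Bit :=
  if ∀ i : Fin (2 * m), m ≤ (i : ℕ) → x i = 1 then ∏ i ∈ firstHalf m, x i else 1

end

private lemma sum_units (f : ℤˣ → ℝ) : ∑ b : ℤˣ, f b = f 1 + f (-1) := by
  rw [show (Finset.univ : Finset ℤˣ) = {1, -1} from by decide]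
  rw [Finset.sum_insert (by decide), Finset.sum_singleton]

private lemma swap_lemma {n : ℕ} (c : Fin n → ℤˣ → ℝ) :
    ∑ x : Fin n → ℤˣ, ∏ i, c i (x i) = ∏ i, (c i 1 + c i (-1)) := by
  have h := Finset.prod_univ_sum (fun _ : Fin n => (Finset.univ : Finset ℤˣ)) (fun i b => c i b)
  rw [Fintype.piFinset_univ] at h
  rw [← h]
  exact Finset.prod_congr rfl fun i _ => sum_units (c i)

private lemma prod_over {n : ℕ} (S : Finset (Fin n)) (f : Fin n → ℝ) :
    ∏ i ∈ S, f i = ∏ i : Fin n, (if i ∈ S then f i else 1) := by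
  rw [← Finset.prod_filter]
  congr 1
  ext i; simp

private lemma card_firstHalf (m : ℕ) : (firstHalf m).card = m := by
  have h : firstHalf m
      = Finset.map ⟨Fin.castLE (by omega), Fin.castLE_injective (by omega : m ≤ 2 * m)⟩
          (Finset.univ : Finset (Fin m)) := by
    ext i
    simp only [firstHalf, Finset.mem_filter, Finset.mem_univ, true_and, Finset.mem_map,
      Function.Embedding.coeFn_mk]
    constructor
    · intro hi; exact ⟨⟨(i : ℕ), hi⟩, by ext; rfl⟩
    · rintro ⟨j, rfl⟩; exact j.2
  rw [h, Finset.card_map, Finset.card_univ, Fintype.card_fin]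

private lemma ind_eq (m : ℕ) (x : Fin (2 * m) → Bit) :
    (if ∀ i : Fin (2 * m), m ≤ (i : ℕ) → x i = 1 then (1 : ℝ) else 0)
      = ∏ i ∈ secondHalf m, (1 + ((x i : ℤ) : ℝ)) / 2 := by
  by_cases h : ∀ i : Fin (2 * m), m ≤ (i : ℕ) → x i = 1
  · rw [if_pos h, eq_comm]
    apply Finset.prod_eq_one
    intro i hi
    rw [h i (by simpa [secondHalf] using hi)]
    norm_num
  · rw [if_neg h, eq_comm]
    push_neg at h
    obtain ⟨i, hi, hne⟩ := h
    apply Finset.prod_eq_zero (show i ∈ secondHalf m by simp [secondHalf, hi])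
    have hx : x i = -1 := (Int.units_eq_one_or (x i)).resolve_left hne
    rw [hx]
    norm_num

private lemma trojan_decomp (m : ℕ) (x : Fin (2 * m) → Bit) :
    ((trojan m x : ℤ) : ℝ)
      = (∏ i ∈ secondHalf m, (1 + ((x i : ℤ) : ℝ)) / 2) * ∏ i ∈ firstHalf m, ((x i : ℤ) : ℝ)
        + (1 - ∏ i ∈ secondHalf m, (1 + ((x i : ℤ) : ℝ)) / 2) := by
  rw [← ind_eq]
  unfold trojan
  by_cases h : ∀ i : Fin (2 * m), m ≤ (i : ℕ) → x i = 1
  · rw [if_pos h, if_pos h]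
    push_cast
    ring
  · rw [if_neg h, if_neg h]
    push_cast
    ring

private lemma sum_chi {n : ℕ} (S : Finset (Fin n)) :
    ∑ x : Fin n → Bit, ∏ i ∈ S, ((x i : ℤ) : ℝ) = if S = ∅ then (2 : ℝ) ^ n else 0 := by
  calc ∑ x : Fin n → Bit, ∏ i ∈ S, ((x i : ℤ) : ℝ)
      = ∑ x : Fin n → Bit, ∏ i : Fin n, (if i ∈ S then ((x i : ℤ) : ℝ) else 1) :=
        Finset.sum_congr rfl fun x _ => prod_over S _
    _ = ∏ i : Fin n, ((if i ∈ S then (((1 : ℤˣ) : ℤ) : ℝ) else 1)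
          + (if i ∈ S then (((-1 : ℤˣ) : ℤ) : ℝ) else 1)) :=
        swap_lemma fun i b => if i ∈ S then ((b : ℤ) : ℝ) else 1
    _ = ∏ i : Fin n, (if i ∈ S then (0 : ℝ) else 2) := by
        refine Finset.prod_congr rfl fun i _ => ?_
        by_cases hi : i ∈ S <;> simp [hi] <;> norm_num
    _ = if S = ∅ then (2 : ℝ) ^ n else 0 := by
        by_cases hS : S = ∅
        · simp [hS]
        · rw [if_neg hS]
          obtain ⟨i, hi⟩ := Finset.nonempty_iff_ne_empty.mpr hS
          exact Finset.prod_eq_zero (Finset.mem_univ i) (by simp [hi])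

private lemma sum_ind_chiA_chiS (m : ℕ) (S : Finset (Fin (2 * m))) :
    ∑ x : Fin (2 * m) → Bit,
      (∏ i ∈ secondHalf m, (1 + ((x i : ℤ) : ℝ)) / 2)
        * ((∏ i ∈ firstHalf m, ((x i : ℤ) : ℝ)) * ∏ i ∈ S, ((x i : ℤ) : ℝ))
    = if firstHalf m ⊆ S then (2 : ℝ) ^ m else 0 := by
  have step : ∀ x : Fin (2 * m) → Bit,
      (∏ i ∈ secondHalf m, (1 + ((x i : ℤ) : ℝ)) / 2)
        * ((∏ i ∈ firstHalf m, ((x i : ℤ) : ℝ)) * ∏ i ∈ S, ((x i : ℤ) : ℝ))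
      = ∏ i : Fin (2 * m),
          ((if i ∈ secondHalf m then (1 + ((x i : ℤ) : ℝ)) / 2 else 1)
            * ((if i ∈ firstHalf m then ((x i : ℤ) : ℝ) else 1)
              * (if i ∈ S then ((x i : ℤ) : ℝ) else 1))) := by
    intro x
    rw [prod_over (secondHalf m), prod_over (firstHalf m), prod_over S,
      ← Finset.prod_mul_distrib, ← Finset.prod_mul_distrib]
  rw [Finset.sum_congr rfl fun x _ => step x,
    swap_lemma fun i b =>
      (if i ∈ secondHalf m then (1 + ((b : ℤ) : ℝ)) / 2 else 1)
        * ((if i ∈ firstHalf m then ((b : ℤ) : ℝ) else 1)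
          * (if i ∈ S then ((b : ℤ) : ℝ) else 1))]
  have hpoint : ∀ i : Fin (2 * m),
      ((if i ∈ secondHalf m then (1 + (((1 : ℤˣ) : ℤ) : ℝ)) / 2 else 1)
          * ((if i ∈ firstHalf m then (((1 : ℤˣ) : ℤ) : ℝ) else 1)
            * (if i ∈ S then (((1 : ℤˣ) : ℤ) : ℝ) else 1))
        + (if i ∈ secondHalf m then (1 + (((-1 : ℤˣ) : ℤ) : ℝ)) / 2 else 1)
          * ((if i ∈ firstHalf m then (((-1 : ℤˣ) : ℤ) : ℝ) else 1)
            * (if i ∈ S then (((-1 : ℤˣ) : ℤ) : ℝ) else 1)))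
      = if i ∈ firstHalf m then (if i ∈ S then (2 : ℝ) else 0) else 1 := by
    intro i
    by_cases hA : (i : ℕ) < m
    · have h1 : i ∈ firstHalf m := by simp [firstHalf, hA]
      have h2 : i ∉ secondHalf m := by simp [secondHalf]; omega
      by_cases hS : i ∈ S <;> simp [h1, h2, hS] <;> norm_num
    · have h1 : i ∉ firstHalf m := by simp [firstHalf, hA]
      have h2 : i ∈ secondHalf m := by simp [secondHalf]; omega
      by_cases hS : i ∈ S <;> simp [h1, h2, hS] <;> norm_num
  rw [Finset.prod_congr rfl fun i _ => hpoint i, ← Finset.prod_filter]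
  have hfil : Finset.univ.filter (fun i => i ∈ firstHalf m) = firstHalf m := by
    ext i; simp
  rw [hfil]
  by_cases hsub : firstHalf m ⊆ S
  · rw [if_pos hsub, Finset.prod_congr rfl fun i hi => if_pos (hsub hi), Finset.prod_const,
      card_firstHalf]
  · rw [if_neg hsub]
    obtain ⟨i, hiA, hiS⟩ := Finset.not_subset.mp hsub
    exact Finset.prod_eq_zero hiA (by simp [hiS])

private lemma sum_ind_chiS (m : ℕ) (S : Finset (Fin (2 * m))) :
    ∑ x : Fin (2 * m) → Bit,
      (∏ i ∈ secondHalf m, (1 + ((x i : ℤ) : ℝ)) / 2) * ∏ i ∈ S, ((x i : ℤ) : ℝ)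
    = if S ∩ firstHalf m = ∅ then (2 : ℝ) ^ m else 0 := by
  have step : ∀ x : Fin (2 * m) → Bit,
      (∏ i ∈ secondHalf m, (1 + ((x i : ℤ) : ℝ)) / 2) * ∏ i ∈ S, ((x i : ℤ) : ℝ)
      = ∏ i : Fin (2 * m),
          ((if i ∈ secondHalf m then (1 + ((x i : ℤ) : ℝ)) / 2 else 1)
            * (if i ∈ S then ((x i : ℤ) : ℝ) else 1)) := by
    intro x
    rw [prod_over (secondHalf m), prod_over S, ← Finset.prod_mul_distrib]
  rw [Finset.sum_congr rfl fun x _ => step x,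
    swap_lemma fun i b =>
      (if i ∈ secondHalf m then (1 + ((b : ℤ) : ℝ)) / 2 else 1)
        * (if i ∈ S then ((b : ℤ) : ℝ) else 1)]
  have hpoint : ∀ i : Fin (2 * m),
      ((if i ∈ secondHalf m then (1 + (((1 : ℤˣ) : ℤ) : ℝ)) / 2 else 1)
          * (if i ∈ S then (((1 : ℤˣ) : ℤ) : ℝ) else 1)
        + (if i ∈ secondHalf m then (1 + (((-1 : ℤˣ) : ℤ) : ℝ)) / 2 else 1)
          * (if i ∈ S then (((-1 : ℤˣ) : ℤ) : ℝ) else 1))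
      = if i ∈ firstHalf m then (if i ∈ S then (0 : ℝ) else 2) else 1 := by
    intro i
    by_cases hA : (i : ℕ) < m
    · have h1 : i ∈ firstHalf m := by simp [firstHalf, hA]
      have h2 : i ∉ secondHalf m := by simp [secondHalf]; omega
      by_cases hS : i ∈ S <;> simp [h1, h2, hS] <;> norm_num
    · have h1 : i ∉ firstHalf m := by simp [firstHalf, hA]
      have h2 : i ∈ secondHalf m := by simp [secondHalf]; omega
      by_cases hS : i ∈ S <;> simp [h1, h2, hS] <;> norm_num
  rw [Finset.prod_congr rfl fun i _ => hpoint i, ← Finset.prod_filter]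
  have hfil : Finset.univ.filter (fun i => i ∈ firstHalf m) = firstHalf m := by
    ext i; simp
  rw [hfil]
  by_cases hc : S ∩ firstHalf m = ∅
  · rw [if_pos hc]
    have hall : ∀ i ∈ firstHalf m, i ∉ S := by
      intro i hiA hiS
      exact (Finset.eq_empty_iff_forall_notMem.mp hc i) (Finset.mem_inter.mpr ⟨hiS, hiA⟩)
    rw [Finset.prod_congr rfl fun i hi => if_neg (hall i hi), Finset.prod_const, card_firstHalf]
  · rw [if_neg hc]
    obtain ⟨i, hi⟩ := Finset.nonempty_iff_ne_empty.mpr hc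
    obtain ⟨hiS, hiA⟩ := Finset.mem_inter.mp hi
    exact Finset.prod_eq_zero hiA (by simp [hiS])

private lemma key (m : ℕ) (S : Finset (Fin (2 * m))) :
    ∑ x : Fin (2 * m) → Bit, ((trojan m x : ℤ) : ℝ) * ∏ i ∈ S, ((x i : ℤ) : ℝ)
      = (if S = ∅ then (2 : ℝ) ^ (2 * m) else 0)
        + ((if firstHalf m ⊆ S then (2 : ℝ) ^ m else 0)
          - (if S ∩ firstHalf m = ∅ then (2 : ℝ) ^ m else 0)) := by
  have expand : ∀ x : Fin (2 * m) → Bit,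
      ((trojan m x : ℤ) : ℝ) * ∏ i ∈ S, ((x i : ℤ) : ℝ)
      = (∏ i ∈ secondHalf m, (1 + ((x i : ℤ) : ℝ)) / 2)
          * ((∏ i ∈ firstHalf m, ((x i : ℤ) : ℝ)) * ∏ i ∈ S, ((x i : ℤ) : ℝ))
        + (∏ i ∈ S, ((x i : ℤ) : ℝ)
          - (∏ i ∈ secondHalf m, (1 + ((x i : ℤ) : ℝ)) / 2) * ∏ i ∈ S, ((x i : ℤ) : ℝ)) := by
    intro x; rw [trojan_decomp]; ring
  rw [Finset.sum_congr rfl fun x _ => expand x, Finset.sum_add_distrib, Finset.sum_sub_distrib,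
    sum_ind_chiA_chiS, sum_chi, sum_ind_chiS]
  ring

/-- The Fourier coefficients of the Trojan horse function `h`: `ĥ(∅) = 1 − 2^{−m}`;
`ĥ(S) = 2^{−m}` whenever `{1,…,m} ⊆ S`; `ĥ(S) = −2^{−m}` for nonempty `S ⊆ {m+1,…,2m}`;
and `ĥ(S) = 0` for all other `S`. -/
theorem trojan_walshCoeff (m : ℕ) (hm : 1 ≤ m) :
    walshCoeff (fun x => ((trojan m x : ℤ) : ℝ)) (∅ : Finset (Fin (2 * m)))
        = 1 - (2 : ℝ) ^ (-(m : ℤ))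
    ∧ (∀ S : Finset (Fin (2 * m)), firstHalf m ⊆ S →
        walshCoeff (fun x => ((trojan m x : ℤ) : ℝ)) S = (2 : ℝ) ^ (-(m : ℤ)))
    ∧ (∀ S : Finset (Fin (2 * m)), S ≠ ∅ → S ⊆ secondHalf m →
        walshCoeff (fun x => ((trojan m x : ℤ) : ℝ)) S = -(2 : ℝ) ^ (-(m : ℤ)))
    ∧ (∀ S : Finset (Fin (2 * m)), S ≠ ∅ → ¬ firstHalf m ⊆ S → ¬ S ⊆ secondHalf m →
        walshCoeff (fun x => ((trojan m x : ℤ) : ℝ)) S = 0) := by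
  have hi0 : (⟨0, by omega⟩ : Fin (2 * m)) ∈ firstHalf m := by
    simp [firstHalf]; omega
  have hApos : (firstHalf m).Nonempty := ⟨_, hi0⟩
  have htpos : (0 : ℝ) < 2 ^ m := by positivity
  have hpow : (2 : ℝ) ^ (2 * m) = (2 ^ m) ^ 2 := by
    rw [← pow_mul]; ring_nf
  have hneg : (2 : ℝ) ^ (-(m : ℤ)) = ((2 : ℝ) ^ m)⁻¹ := by
    rw [zpow_neg, zpow_natCast]
  refine ⟨?_, ?_, ?_, ?_⟩
  · unfold walshCoeff
    rw [key, if_pos rfl, if_neg (fun h => hApos.ne_empty (Finset.subset_empty.mp h)),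
      if_pos (Finset.empty_inter _), hpow, hneg]
    field_simp
    ring
  · intro S hsub
    have hSne : S ≠ ∅ := fun h => hApos.ne_empty (Finset.subset_empty.mp (h ▸ hsub))
    have hint : S ∩ firstHalf m ≠ ∅ := by
      intro h
      exact (Finset.eq_empty_iff_forall_notMem.mp h _)
        (Finset.mem_inter.mpr ⟨hsub hi0, hi0⟩)
    unfold walshCoeff
    rw [key, if_neg hSne, if_pos hsub, if_neg hint, hpow, hneg]
    field_simp
    ring
  · intro S hne hsubB
    have hnsubA : ¬ firstHalf m ⊆ S := by
      intro h
      have := hsubB (h hi0)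
      simp [secondHalf] at this
      omega
    have hint : S ∩ firstHalf m = ∅ := by
      apply Finset.eq_empty_iff_forall_notMem.mpr
      intro i hi
      obtain ⟨hiS, hiA⟩ := Finset.mem_inter.mp hi
      have h1 := hsubB hiS
      simp [secondHalf] at h1
      simp [firstHalf] at hiA
      omega
    unfold walshCoeff
    rw [key, if_neg hne, if_neg hnsubA, if_pos hint, hpow, hneg]
    field_simp
    ring
  · intro S hne hnsubA hnsubB
    have hint : S ∩ firstHalf m ≠ ∅ := by
      obtain ⟨i, hiS, hiB⟩ := Finset.not_subset.mp hnsubB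
      intro h
      apply Finset.eq_empty_iff_forall_notMem.mp h i
      apply Finset.mem_inter.mpr
      refine ⟨hiS, ?_⟩
      simp [secondHalf] at hiB
      simp [firstHalf]
      omega
    unfold walshCoeff
    rw [key, if_neg hne, if_neg hnsubA, if_neg hint]
    simp
end

section
/- Let (𝒩, B) be a no-signaling channel from n bits to N bits, with n ≥ 1. Let μ (respectively ν) be the probability distribution on {−1,1}^N obtained by drawing x uniformly from the set of strings in {−1,1}^n with an even (respectively odd) number of −1 entries and then sampling from 𝒩(x). Then for every S ⊆ [N] such that B(S) \ {⊥} is a proper subset of [n], the marginal distributions of μ and ν on the coordinates S coincide. In particular, μ and ν are (n−1)-wise indistinguishable: their marginals agree on every S ⊆ [N] with |S| ≤ n−1. -/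
open scoped Classical ENNReal

noncomputable section

/-- A channel from `ι`-indexed bit strings to `κ`-indexed bit strings. -/
abbrev Channel (ι κ : Type) : Type := (ι → Bit) → PMF (κ → Bit)

/-- Marginal of a distribution on the cube on the coordinates in `T`. -/
def marg {κ : Type} (p : PMF (κ → Bit)) (T : Finset κ) : PMF ({i // i ∈ T} → Bit) :=
  p.map fun y i => y i.1

/-- The preimage `B⁻¹(S ∪ {⊥})`. -/
def preim {ι κ : Type} [Fintype κ] (B : κ → Option ι) (S : Finset ι) : Finset κ :=
  Finset.univ.filter fun ℓ => ∀ a, B ℓ = some a → a ∈ S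

/-- `(𝒩, B)` is a no-signaling channel: for every `S` and inputs agreeing on `S`, the
marginals of the outputs on `B⁻¹(S ∪ {⊥})` agree. -/
def NoSignaling {ι κ : Type} [Fintype κ] (𝒩 : Channel ι κ) (B : κ → Option ι) : Prop :=
  ∀ (S : Finset ι) (x x' : ι → Bit), (∀ a ∈ S, x a = x' a) →
    marg (𝒩 x) (preim B S) = marg (𝒩 x') (preim B S)


def evens (n : ℕ) : Finset (Fin n → Bit) := Finset.univ.filter fun x => (∏ i, x i) = 1

def odds (n : ℕ) : Finset (Fin n → Bit) := Finset.univ.filter fun x => (∏ i, x i) = -1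

lemma evens_nonempty (n : ℕ) : (evens n).Nonempty := ⟨fun _ => 1, by simp [evens]⟩

lemma odds_nonempty {n : ℕ} (hn : 1 ≤ n) : (odds n).Nonempty := by
  refine ⟨Function.update (fun _ => 1) ⟨0, hn⟩ (-1), ?_⟩
  simp only [odds, Finset.mem_filter, Finset.mem_univ, true_and]
  rw [Finset.prod_update_of_mem (Finset.mem_univ _)]
  simp

end

lemma marg_mono {κ : Type} {p q : PMF (κ → Bit)} {S T : Finset κ} (hST : S ⊆ T)
    (h : marg p T = marg q T) : marg p S = marg q S := by
  have key : ∀ r : PMF (κ → Bit), marg r S =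
      (marg r T).map (fun y i => y ⟨i.1, hST i.2⟩) := by
    intro r
    simp only [marg, PMF.map_comp]
    rfl
  rw [key p, key q, h]

lemma uniform_bind_apply {α β : Type} [Fintype α] (s : Finset α) (hs : s.Nonempty)
    (g : α → PMF β) (y : β) :
    ((PMF.uniformOfFinset s hs).bind g) y = ∑ x ∈ s, (s.card : ℝ≥0∞)⁻¹ * g x y := by
  rw [PMF.bind_apply, tsum_fintype]
  rw [← Finset.sum_subset (Finset.subset_univ s)]
  · refine Finset.sum_congr rfl fun x hx => ?_
    rw [PMF.uniformOfFinset_apply, if_pos hx]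
  · intro x _ hx
    rw [PMF.uniformOfFinset_apply, if_neg hx, zero_mul]

/-- Pushing the uniform distribution on even-parity strings (μ) and on odd-parity
strings (ν) through a no-signaling channel yields distributions whose marginals agree
on every set `S` of output coordinates with `B(S) ∖ {⊥} ⊊ [n]`; in particular, μ and ν
are `(n−1)`-wise indistinguishable. -/
theorem nsc_parity_indistinguishable {n N : ℕ} (hn : 1 ≤ n)
    (𝒩 : Channel (Fin n) (Fin N)) (B : Fin N → Option (Fin n))
    (hNS : NoSignaling 𝒩 B) :
    (∀ S : Finset (Fin N), (∃ a : Fin n, ∀ j ∈ S, B j ≠ some a) →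
      marg ((PMF.uniformOfFinset (evens n) (evens_nonempty n)).bind 𝒩) S
        = marg ((PMF.uniformOfFinset (odds n) (odds_nonempty hn)).bind 𝒩) S)
    ∧ (∀ S : Finset (Fin N), S.card ≤ n - 1 →
      marg ((PMF.uniformOfFinset (evens n) (evens_nonempty n)).bind 𝒩) S
        = marg ((PMF.uniformOfFinset (odds n) (odds_nonempty hn)).bind 𝒩) S) := by
  have main : ∀ S : Finset (Fin N), (∃ a : Fin n, ∀ j ∈ S, B j ≠ some a) →
      marg ((PMF.uniformOfFinset (evens n) (evens_nonempty n)).bind 𝒩) S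
        = marg ((PMF.uniformOfFinset (odds n) (odds_nonempty hn)).bind 𝒩) S := by
    rintro S ⟨a, ha⟩
    set T : Finset (Fin n) := Finset.univ.erase a with hT
    have hST : S ⊆ preim B T := by
      intro j hj
      simp only [preim, Finset.mem_filter, Finset.mem_univ, true_and]
      intro b hb
      simp only [hT, Finset.mem_erase, Finset.mem_univ, and_true]
      intro hba
      exact ha j hj (hba ▸ hb)
    set φ : (Fin n → Bit) → (Fin n → Bit) := fun x => Function.update x a (-(x a)) with hφ
    have hφprod : ∀ x : Fin n → Bit, (∏ i, φ x i) = -(∏ i, x i) := by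
      intro x
      simp only [hφ]
      rw [Finset.prod_update_of_mem (Finset.mem_univ a),
        ← Finset.mul_prod_erase Finset.univ x (Finset.mem_univ a), Finset.erase_eq]
      exact neg_mul _ _
    have hφφ : ∀ x, φ (φ x) = x := by
      intro x
      funext i
      by_cases hi : i = a
      · subst hi; simp [hφ]
      · simp [hφ, Function.update_of_ne hi]
    have hφmem : ∀ x ∈ evens n, φ x ∈ odds n := by
      intro x hx
      simp only [evens, Finset.mem_filter, Finset.mem_univ, true_and] at hx
      simp only [odds, Finset.mem_filter, Finset.mem_univ, true_and, hφprod, hx]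
    have hφmem' : ∀ x ∈ odds n, φ x ∈ evens n := by
      intro x hx
      simp only [odds, Finset.mem_filter, Finset.mem_univ, true_and] at hx
      simp only [evens, Finset.mem_filter, Finset.mem_univ, true_and, hφprod, hx, neg_neg]
    have hcard : (evens n).card = (odds n).card :=
      Finset.card_bij' (fun x _ => φ x) (fun x _ => φ x) hφmem hφmem'
        (fun x _ => hφφ x) (fun x _ => hφφ x)
    have hg : ∀ x, marg (𝒩 x) (preim B T) = marg (𝒩 (φ x)) (preim B T) := by
      intro x
      refine hNS T x (φ x) fun b hb => ?_
      have hba : b ≠ a := by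
        simp only [hT, Finset.mem_erase] at hb; exact hb.1
      simp [hφ, Function.update_of_ne hba]
    apply marg_mono hST
    have hmb : ∀ (p : PMF (Fin n → Bit)),
        marg (p.bind 𝒩) (preim B T) = p.bind fun x => marg (𝒩 x) (preim B T) := by
      intro p
      simp only [marg, PMF.map_bind]
    rw [hmb, hmb]
    apply PMF.ext
    intro y
    rw [uniform_bind_apply, uniform_bind_apply, hcard]
    refine Finset.sum_nbij' (fun x => φ x) (fun x => φ x) hφmem hφmem'
      (fun x _ => hφφ x) (fun x _ => hφφ x) ?_
    intro x _
    rw [hg x]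
  refine ⟨main, fun S hS => main S ?_⟩
  have hA : (Finset.univ.filter fun a : Fin n => ∃ j ∈ S, B j = some a) ≠ Finset.univ := by
    intro hcontra
    have h1 : (Finset.univ.filter fun a : Fin n => ∃ j ∈ S, B j = some a).card ≤ S.card := by
      refine le_trans (Finset.card_le_card ?_)
        (Finset.card_image_le (f := fun j => (B j).getD ⟨0, hn⟩))
      intro a hamem
      simp only [Finset.mem_filter, Finset.mem_univ, true_and] at hamem
      obtain ⟨j, hj, hBj⟩ := hamem
      exact Finset.mem_image.2 ⟨j, hj, by rw [hBj]; rfl⟩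
    rw [hcontra] at h1
    simp only [Finset.card_univ, Fintype.card_fin] at h1
    omega
  have hex : ∃ a : Fin n, a ∉ (Finset.univ.filter fun a : Fin n => ∃ j ∈ S, B j = some a) := by
    by_contra hcon
    push_neg at hcon
    exact hA (Finset.eq_univ_of_forall hcon)
  obtain ⟨a, ha⟩ := hex
  refine ⟨a, fun j hj hBj => ha ?_⟩
  simp only [Finset.mem_filter, Finset.mem_univ, true_and]
  exact ⟨j, hj, hBj⟩
end

section
/- Let (𝒩, B) be a no-signaling channel from n bits to N bits with n ≥ 1, let f : {−1,1}^N → {−1,1}, and let δ ≥ 0. Suppose there exists a multilinear real polynomial g on {−1,1}^N of degree at most n − 1 with |f(y) − g(y)| ≤ δ for all y ∈ {−1,1}^N. Then |E_x[E_{y∼𝒩(x)}[f(y)] · Par_n(x)]| ≤ δ, where the expectation is over x uniform in {−1,1}^n. -/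
open scoped Classical ENNReal

noncomputable section

/-- Expectation of a real-valued function under a `PMF` on a finite type. -/
def pexp {α : Type} [Fintype α] (p : PMF α) (f : α → ℝ) : ℝ :=
  ∑ a, (p a).toReal * f a

end

/- ==================== auxiliary lemmas ==================== -/

lemma aux_bit_cases (u : Bit) : u = 1 ∨ u = -1 := Int.units_eq_one_or u

lemma aux_bit_abs (u : Bit) : |((u : ℤ) : ℝ)| = 1 := by
  rcases aux_bit_cases u with h | h <;> simp [h]

lemma aux_pmf_sum_one {α : Type} [Fintype α] (p : PMF α) : ∑ a, (p a).toReal = 1 := by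
  have h := p.tsum_coe
  rw [tsum_fintype] at h
  rw [← ENNReal.toReal_sum (fun a _ => p.apply_ne_top a), h, ENNReal.toReal_one]

lemma aux_pexp_map {α β : Type} [Fintype α] [Fintype β] (p : PMF α) (φ : α → β) (h : β → ℝ) :
    pexp (p.map φ) h = pexp p (h ∘ φ) := by
  classical
  unfold pexp
  have key : ∀ b, ((p.map φ) b).toReal = ∑ a, if b = φ a then (p a).toReal else 0 := by
    intro b
    rw [PMF.map_apply, tsum_fintype, ENNReal.toReal_sum]
    · exact Finset.sum_congr rfl fun a _ => by split <;> simp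
    · intro a _; split
      · exact p.apply_ne_top a
      · simp
  simp only [key, Finset.sum_mul]
  rw [Finset.sum_comm]
  refine Finset.sum_congr rfl fun a _ => ?_
  simp [ite_mul, Function.comp]

lemma aux_pexp_congr {α : Type} [Fintype α] (p : PMF α) {h h' : α → ℝ}
    (he : ∀ a, h a = h' a) : pexp p h = pexp p h' := by
  unfold pexp; exact Finset.sum_congr rfl fun a _ => by rw [he a]

lemma aux_pexp_abs_le {α : Type} [Fintype α] (p : PMF α) (h : α → ℝ) (δ : ℝ)
    (hb : ∀ a, |h a| ≤ δ) : |pexp p h| ≤ δ := by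
  unfold pexp
  calc |∑ a, (p a).toReal * h a| ≤ ∑ a, |(p a).toReal * h a| :=
        Finset.abs_sum_le_sum_abs _ _
    _ ≤ ∑ a, (p a).toReal * δ := Finset.sum_le_sum (fun a _ => by
        rw [abs_mul, abs_of_nonneg ENNReal.toReal_nonneg]
        exact mul_le_mul_of_nonneg_left (hb a) ENNReal.toReal_nonneg)
    _ = δ := by rw [← Finset.sum_mul, aux_pmf_sum_one]; ring

lemma aux_bit_prod (u v : Bit) : ((u : ℤ) : ℝ) * ((v : ℤ) : ℝ) + 1 = if u = v then 2 else 0 := by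
  rcases aux_bit_cases u with h | h <;> rcases aux_bit_cases v with h' | h' <;>
    subst h <;> subst h' <;> norm_num

lemma aux_walsh_inversion {N : ℕ} (g : (Fin N → Bit) → ℝ) (y : Fin N → Bit) :
    g y = ∑ S : Finset (Fin N), walshCoeff g S * ∏ i ∈ S, ((y i : ℤ) : ℝ) := by
  classical
  unfold walshCoeff
  have key : ∀ x : Fin N → Bit,
      ∑ S : Finset (Fin N), (∏ i ∈ S, ((x i : ℤ) : ℝ)) * ∏ i ∈ S, ((y i : ℤ) : ℝ)
        = if x = y then (2 : ℝ) ^ N else 0 := by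
    intro x
    have h1 : ∀ S : Finset (Fin N),
        (∏ i ∈ S, ((x i : ℤ) : ℝ)) * ∏ i ∈ S, ((y i : ℤ) : ℝ)
          = ∏ i ∈ S, (((x i : ℤ) : ℝ) * ((y i : ℤ) : ℝ)) := by
      intro S; rw [Finset.prod_mul_distrib]
    simp only [h1]
    have h2 : (∏ i : Fin N, (((x i : ℤ) : ℝ) * ((y i : ℤ) : ℝ) + 1))
        = ∑ S ∈ (Finset.univ : Finset (Fin N)).powerset,
            (∏ i ∈ S, (((x i : ℤ) : ℝ) * ((y i : ℤ) : ℝ))) * ∏ i ∈ Finset.univ \ S, (1 : ℝ) :=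
      Finset.prod_add _ _ _
    simp only [Finset.prod_const_one, mul_one, Finset.powerset_univ,
      Finset.sum_coe_sort] at h2
    rw [← h2]
    by_cases hxy : x = y
    · subst hxy
      rw [Finset.prod_congr rfl (fun i _ => aux_bit_prod (x i) (x i))]
      simp
    · have : ∃ i, x i ≠ y i := by
        by_contra hc; push_neg at hc; exact hxy (funext hc)
      obtain ⟨i, hi⟩ := this
      rw [Finset.prod_congr rfl (fun j _ => aux_bit_prod (x j) (y j))]
      rw [Finset.prod_eq_zero (Finset.mem_univ i) (by simp [hi])]
      simp [hxy]
  calc g y = (∑ x : Fin N → Bit, g x * if x = y then (2:ℝ)^N else 0) / 2 ^ N := by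
        have hs : (∑ x : Fin N → Bit, g x * if x = y then (2:ℝ)^N else 0)
            = g y * 2 ^ N := by
          simp only [mul_ite, mul_zero]
          rw [Finset.sum_ite_eq' Finset.univ y (fun x => g x * (2:ℝ)^N)]
          simp
        rw [hs]
        field_simp
    _ = _ := by
        simp only [← key, Finset.mul_sum, Finset.sum_div]
        rw [Finset.sum_comm]
        refine Finset.sum_congr rfl fun S _ => ?_
        rw [Finset.sum_mul]
        refine Finset.sum_congr rfl fun x _ => ?_
        ring

lemma aux_corr_zero {n N : ℕ} (𝒩 : Channel (Fin n) (Fin N)) (B : Fin N → Option (Fin n))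
    (hNS : NoSignaling 𝒩 B) (S : Finset (Fin N)) (hS : S.card < n) :
    ∑ x : Fin n → Bit,
      pexp (𝒩 x) (fun y => ∏ i ∈ S, ((y i : ℤ) : ℝ)) * ∏ i, ((x i : ℤ) : ℝ) = 0 := by
  classical
  set S' : Finset (Fin n) := S.biUnion (fun ℓ => (B ℓ).toFinset) with hS'def
  have hcard : S'.card < n := by
    have h1 : S'.card ≤ ∑ ℓ ∈ S, (B ℓ).toFinset.card := Finset.card_biUnion_le
    have h2 : ∑ ℓ ∈ S, (B ℓ).toFinset.card ≤ ∑ ℓ ∈ S, 1 :=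
      Finset.sum_le_sum (fun ℓ _ => by cases B ℓ <;> simp [Option.toFinset])
    simp only [Finset.sum_const, smul_eq_mul, mul_one] at h2
    omega
  obtain ⟨a, ha⟩ : ∃ a, a ∉ S' := by
    by_contra h; push_neg at h
    have hsub : (Finset.univ : Finset (Fin n)) ⊆ S' := fun b _ => h b
    have := Finset.card_le_card hsub
    simp [Finset.card_univ] at this
    omega
  have hsub : S ⊆ preim B S' := by
    intro ℓ hℓ
    simp only [preim, Finset.mem_filter, Finset.mem_univ, true_and]
    intro b hb
    exact Finset.mem_biUnion.2 ⟨ℓ, hℓ, by simp [hb]⟩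
  -- pexp of χ_S depends only on coordinates in S'
  have key : ∀ x x' : Fin n → Bit, (∀ b ∈ S', x b = x' b) →
      pexp (𝒩 x) (fun y => ∏ i ∈ S, ((y i : ℤ) : ℝ)) =
      pexp (𝒩 x') (fun y => ∏ i ∈ S, ((y i : ℤ) : ℝ)) := by
    intro x x' hxx
    have hm := hNS S' x x' hxx
    set T := preim B S' with hT
    set h' : ({i // i ∈ T} → Bit) → ℝ :=
      fun z => ∏ i ∈ S.attach, ((z ⟨i.1, hsub i.2⟩ : ℤ) : ℝ) with hh'
    have hfac : ∀ (y : Fin N → Bit),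
        (∏ i ∈ S, ((y i : ℤ) : ℝ)) = h' (fun i => y i.1) := by
      intro y
      rw [hh']
      exact (Finset.prod_attach S (fun i => ((y i : ℤ) : ℝ))).symm
    calc pexp (𝒩 x) (fun y => ∏ i ∈ S, ((y i : ℤ) : ℝ))
        = pexp (𝒩 x) (h' ∘ fun y (i : {i // i ∈ T}) => y i.1) :=
          aux_pexp_congr _ (fun y => hfac y)
      _ = pexp (marg (𝒩 x) T) h' := (aux_pexp_map _ _ _).symm
      _ = pexp (marg (𝒩 x') T) h' := by rw [hm]
      _ = pexp (𝒩 x') (h' ∘ fun y (i : {i // i ∈ T}) => y i.1) := aux_pexp_map _ _ _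
      _ = pexp (𝒩 x') (fun y => ∏ i ∈ S, ((y i : ℤ) : ℝ)) :=
          (aux_pexp_congr _ (fun y => hfac y)).symm
  -- pairing argument
  set flip : (Fin n → Bit) → (Fin n → Bit) :=
    fun x => Function.update x a (-(x a)) with hflip
  have flipinv : Function.Involutive flip := by
    intro x; funext i
    by_cases h : i = a
    · subst h; simp [hflip, Function.update_apply]
    · simp [hflip, Function.update_apply, h]
  set H : (Fin n → Bit) → ℝ :=
    fun x => pexp (𝒩 x) (fun y => ∏ i ∈ S, ((y i : ℤ) : ℝ)) * ∏ i, ((x i : ℤ) : ℝ) with hH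
  have hHflip : ∀ x, H (flip x) = -H x := by
    intro x
    have h1 : pexp (𝒩 (flip x)) (fun y => ∏ i ∈ S, ((y i : ℤ) : ℝ))
        = pexp (𝒩 x) (fun y => ∏ i ∈ S, ((y i : ℤ) : ℝ)) := by
      apply key
      intro b hb
      have hba : b ≠ a := fun h => ha (h ▸ hb)
      simp [hflip, Function.update_apply, hba]
    have h2 : (∏ i, ((flip x i : ℤ) : ℝ)) = -∏ i, ((x i : ℤ) : ℝ) := by
      have he : ∀ i, ((flip x i : ℤ) : ℝ)
          = Function.update (fun i => ((x i : ℤ) : ℝ)) a (-((x a : ℤ) : ℝ)) i := by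
        intro i
        by_cases h : i = a
        · subst h; simp [hflip, Function.update_apply]
        · simp [hflip, Function.update_apply, h]
      rw [Finset.prod_congr rfl (fun i _ => he i)]
      rw [Finset.prod_update_of_mem (Finset.mem_univ a)
        (fun i => ((x i : ℤ) : ℝ)) (-((x a : ℤ) : ℝ))]
      have hset : Finset.univ \ ({a} : Finset (Fin n)) = Finset.univ.erase a :=
        Finset.sdiff_singleton_eq_erase a Finset.univ
      rw [hset, neg_mul,
        Finset.mul_prod_erase Finset.univ (fun i => ((x i : ℤ) : ℝ)) (Finset.mem_univ a)]
    rw [hH]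
    simp only [h1, h2]
    ring
  have hsum : ∑ x, H x = ∑ x, H (flip x) :=
    (Equiv.sum_comp (flipinv.toPerm flip) H).symm
  have : ∑ x, H x = -∑ x, H x := by
    calc ∑ x, H x = ∑ x, H (flip x) := hsum
      _ = ∑ x, -H x := Finset.sum_congr rfl fun x _ => hHflip x
      _ = -∑ x, H x := by rw [Finset.sum_neg_distrib]
  linarith

/-- If `f : {−1,1}^N → {−1,1}` is approximated pointwise within `δ` by a multilinear real
polynomial `g` of degree at most `n − 1` (i.e. `ĝ(S) = 0` whenever `|S| > n − 1`), then for
any no-signaling channel `(𝒩, B)` from `n` bits to `N` bits,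
`|E_x[E_{y∼𝒩(x)}[f(y)] · Par_n(x)]| ≤ δ`. -/
theorem nsc_approx_degree_correlation_bound {n N : ℕ} (hn : 1 ≤ n)
    (𝒩 : Channel (Fin n) (Fin N)) (B : Fin N → Option (Fin n))
    (hNS : NoSignaling 𝒩 B) (f : (Fin N → Bit) → Bit) (δ : ℝ) (hδ : 0 ≤ δ)
    (g : (Fin N → Bit) → ℝ)
    (hdeg : ∀ S : Finset (Fin N), n - 1 < S.card → walshCoeff g S = 0)
    (happrox : ∀ y : Fin N → Bit, |((f y : ℤ) : ℝ) - g y| ≤ δ) :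
    |(∑ x : Fin n → Bit,
        pexp (𝒩 x) (fun y => ((f y : ℤ) : ℝ)) * ∏ i, ((x i : ℤ) : ℝ)) / 2 ^ n| ≤ δ := by
  classical
  -- the g-part of the correlation vanishes
  have hexp : ∀ x : Fin n → Bit, pexp (𝒩 x) g
      = ∑ S : Finset (Fin N), walshCoeff g S *
          pexp (𝒩 x) (fun y => ∏ i ∈ S, ((y i : ℤ) : ℝ)) := by
    intro x
    unfold pexp
    calc ∑ a, ((𝒩 x) a).toReal * g a
        = ∑ a, ∑ S : Finset (Fin N),
            ((𝒩 x) a).toReal * (walshCoeff g S * ∏ i ∈ S, ((a i : ℤ) : ℝ)) := by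
          refine Finset.sum_congr rfl fun a _ => ?_
          rw [aux_walsh_inversion g a, Finset.mul_sum]
      _ = ∑ S : Finset (Fin N), walshCoeff g S *
            ∑ a, ((𝒩 x) a).toReal * ∏ i ∈ S, ((a i : ℤ) : ℝ) := by
          rw [Finset.sum_comm]
          refine Finset.sum_congr rfl fun S _ => ?_
          rw [Finset.mul_sum]
          exact Finset.sum_congr rfl fun a _ => by ring
  have hgzero : ∑ x : Fin n → Bit, pexp (𝒩 x) g * ∏ i, ((x i : ℤ) : ℝ) = 0 := by
    have h1 : ∑ x : Fin n → Bit, pexp (𝒩 x) g * ∏ i, ((x i : ℤ) : ℝ)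
        = ∑ S : Finset (Fin N), walshCoeff g S *
            ∑ x : Fin n → Bit,
              pexp (𝒩 x) (fun y => ∏ i ∈ S, ((y i : ℤ) : ℝ)) * ∏ i, ((x i : ℤ) : ℝ) := by
      calc ∑ x : Fin n → Bit, pexp (𝒩 x) g * ∏ i, ((x i : ℤ) : ℝ)
          = ∑ x : Fin n → Bit, ∑ S : Finset (Fin N),
              walshCoeff g S *
                (pexp (𝒩 x) (fun y => ∏ i ∈ S, ((y i : ℤ) : ℝ)) * ∏ i, ((x i : ℤ) : ℝ)) := by
            refine Finset.sum_congr rfl fun x _ => ?_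
            rw [hexp x, Finset.sum_mul]
            exact Finset.sum_congr rfl fun S _ => by ring
        _ = _ := by
            rw [Finset.sum_comm]
            exact Finset.sum_congr rfl fun S _ => by rw [Finset.mul_sum]
    rw [h1]
    refine Finset.sum_eq_zero fun S _ => ?_
    by_cases hc : n - 1 < S.card
    · rw [hdeg S hc, zero_mul]
    · have hlt : S.card < n := by omega
      rw [aux_corr_zero 𝒩 B hNS S hlt, mul_zero]
  -- replace f by f - g
  have hsplit : ∑ x : Fin n → Bit,
      pexp (𝒩 x) (fun y => ((f y : ℤ) : ℝ)) * ∏ i, ((x i : ℤ) : ℝ)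
      = ∑ x : Fin n → Bit,
          pexp (𝒩 x) (fun y => ((f y : ℤ) : ℝ) - g y) * ∏ i, ((x i : ℤ) : ℝ) := by
    have hps : ∀ x : Fin n → Bit,
        pexp (𝒩 x) (fun y => ((f y : ℤ) : ℝ) - g y)
          = pexp (𝒩 x) (fun y => ((f y : ℤ) : ℝ)) - pexp (𝒩 x) g := by
      intro x
      simp [pexp, mul_sub, Finset.sum_sub_distrib]
    calc ∑ x : Fin n → Bit,
        pexp (𝒩 x) (fun y => ((f y : ℤ) : ℝ)) * ∏ i, ((x i : ℤ) : ℝ)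
        = (∑ x : Fin n → Bit,
            pexp (𝒩 x) (fun y => ((f y : ℤ) : ℝ) - g y) * ∏ i, ((x i : ℤ) : ℝ))
          + ∑ x : Fin n → Bit, pexp (𝒩 x) g * ∏ i, ((x i : ℤ) : ℝ) := by
          rw [← Finset.sum_add_distrib]
          refine Finset.sum_congr rfl fun x _ => ?_
          rw [hps x]
          ring
      _ = _ := by rw [hgzero, add_zero]
  rw [hsplit]
  -- final bound
  have hterm : ∀ x : Fin n → Bit,
      |pexp (𝒩 x) (fun y => ((f y : ℤ) : ℝ) - g y) * ∏ i, ((x i : ℤ) : ℝ)| ≤ δ := by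
    intro x
    rw [abs_mul]
    have h1 : |pexp (𝒩 x) (fun y => ((f y : ℤ) : ℝ) - g y)| ≤ δ :=
      aux_pexp_abs_le _ _ _ happrox
    have h2 : |∏ i, ((x i : ℤ) : ℝ)| = 1 := by
      rw [Finset.abs_prod]
      simp [aux_bit_abs]
    rw [h2, mul_one]
    exact h1
  have hcard : (Finset.univ : Finset (Fin n → Bit)).card = 2 ^ n := by
    rw [Finset.card_univ]
    rw [Fintype.card_fun]
    norm_num
  have hbound : |∑ x : Fin n → Bit,
      pexp (𝒩 x) (fun y => ((f y : ℤ) : ℝ) - g y) * ∏ i, ((x i : ℤ) : ℝ)| ≤ 2 ^ n * δ := by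
    calc |∑ x : Fin n → Bit,
        pexp (𝒩 x) (fun y => ((f y : ℤ) : ℝ) - g y) * ∏ i, ((x i : ℤ) : ℝ)|
        ≤ ∑ x : Fin n → Bit,
            |pexp (𝒩 x) (fun y => ((f y : ℤ) : ℝ) - g y) * ∏ i, ((x i : ℤ) : ℝ)| :=
          Finset.abs_sum_le_sum_abs _ _
      _ ≤ ∑ _x : Fin n → Bit, δ := Finset.sum_le_sum fun x _ => hterm x
      _ = 2 ^ n * δ := by
          rw [Finset.sum_const, hcard, nsmul_eq_mul]
          push_cast
          ring
  rw [abs_div]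
  have h2n : |((2 : ℝ) ^ n)| = 2 ^ n := abs_of_pos (by positivity)
  rw [h2n, div_le_iff₀ (by positivity)]
  linarith
end

section
/- Let (𝒩, B) be a no-signaling channel from n bits to N bits and let f : {−1,1}^N → ℝ. Define F : {−1,1}^n → ℝ by F(x) = E_{y∼𝒩(x)}[f(y)]. Then deg(F) ≤ deg(f); equivalently, F̂(S) = 0 for every S ⊆ [n] with |S| > deg(f). -/
open scoped Classical ENNReal

noncomputable section AuxNSC

lemma bitR (b : Bit) : ((b:ℤ):ℝ) = 1 ∨ ((b:ℤ):ℝ) = -1 := by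
  rcases Int.units_eq_one_or b with h | h <;> simp [h]

lemma bit_mul_self (b : Bit) : ((b:ℤ):ℝ) * ((b:ℤ):ℝ) = 1 := by
  rcases bitR b with h|h <;> rw [h] <;> ring

lemma pexp_map {α β : Type} [Fintype α] [Fintype β] (p : PMF α) (g : α → β) (h : β → ℝ) :
    pexp (p.map g) h = pexp p (fun a => h (g a)) := by
  unfold pexp
  have key : ∀ b, ((p.map g) b).toReal = ∑ a, if b = g a then (p a).toReal else 0 := by
    intro b
    rw [PMF.map_apply, tsum_fintype, ENNReal.toReal_sum]
    · exact Finset.sum_congr rfl fun a _ => by split <;> simp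
    · intro a _
      split
      · exact p.apply_ne_top a
      · simp
  simp_rw [key, Finset.sum_mul]
  rw [Finset.sum_comm]
  refine Finset.sum_congr rfl fun a _ => ?_
  simp [ite_mul, Finset.sum_ite_eq' Finset.univ (g a)]

lemma pexp_sum {α β : Type} [Fintype α] (p : PMF α) (s : Finset β) (f : β → α → ℝ) :
    pexp p (fun a => ∑ t ∈ s, f t a) = ∑ t ∈ s, pexp p (f t) := by
  unfold pexp
  simp_rw [Finset.mul_sum]
  exact Finset.sum_comm

lemma pexp_smul {α : Type} [Fintype α] (p : PMF α) (c : ℝ) (f : α → ℝ) :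
    pexp p (fun a => c * f a) = c * pexp p f := by
  unfold pexp
  rw [Finset.mul_sum]
  exact Finset.sum_congr rfl fun a _ => by ring

lemma pexp_marg {N : ℕ} (p : PMF (Fin N → Bit)) (U : Finset (Fin N))
    (h : ({i // i ∈ U} → Bit) → ℝ) :
    pexp (marg p U) h = pexp p (fun y => h (fun j => y j.1)) :=
  pexp_map p _ h

lemma fourier_inv {N : ℕ} (f : (Fin N → Bit) → ℝ) (y : Fin N → Bit) :
    f y = ∑ T : Finset (Fin N), walshCoeff f T * ∏ i ∈ T, ((y i : ℤ) : ℝ) := by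
  unfold walshCoeff
  simp_rw [div_mul_eq_mul_div, Finset.sum_mul, Finset.sum_div]
  rw [Finset.sum_comm]
  have key : ∀ x : Fin N → Bit,
      (∑ T : Finset (Fin N), ∏ i ∈ T, (((x i:ℤ):ℝ) * ((y i:ℤ):ℝ)))
        = if x = y then (2:ℝ)^N else 0 := by
    intro x
    have h2 : (∑ T : Finset (Fin N), ∏ i ∈ T, (((x i:ℤ):ℝ) * ((y i:ℤ):ℝ)))
        = ∏ i : Fin N, (((x i:ℤ):ℝ) * ((y i:ℤ):ℝ) + 1) := by
      rw [Finset.prod_add]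
      simp [← Finset.powerset_univ]
    rw [h2]
    by_cases hxy : x = y
    · subst hxy
      rw [if_pos rfl]
      have h3 : ∀ i, ((x i:ℤ):ℝ) * ((x i:ℤ):ℝ) + 1 = 2 := fun i => by
        rw [bit_mul_self]; norm_num
      simp [h3]
    · rw [if_neg hxy]
      obtain ⟨i, hi⟩ : ∃ i, x i ≠ y i := by
        by_contra h; push_neg at h; exact hxy (funext h)
      apply Finset.prod_eq_zero (Finset.mem_univ i)
      rcases Int.units_eq_one_or (x i) with h|h <;> rcases Int.units_eq_one_or (y i) with h'|h' <;>
        first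
        | (exfalso; rw [h, h'] at hi; exact hi rfl)
        | (rw [h, h']; norm_num)
  simp_rw [mul_assoc, ← Finset.prod_mul_distrib, ← Finset.sum_div, ← Finset.mul_sum, key]
  have h4 : (∑ x : Fin N → Bit, f x * if x = y then (2:ℝ)^N else 0) = f y * 2^N := by
    simp_rw [mul_ite, mul_zero]
    rw [Finset.sum_ite_eq' Finset.univ y, if_pos (Finset.mem_univ y)]
  rw [h4, mul_div_assoc, div_self (by positivity), mul_one]

lemma junta_coeff_zero {n : ℕ} (G : (Fin n → Bit) → ℝ) (A S : Finset (Fin n))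
    (hG : ∀ x x', (∀ a ∈ A, x a = x' a) → G x = G x') (hS : ¬ S ⊆ A) :
    walshCoeff G S = 0 := by
  obtain ⟨a, haS, haA⟩ := Finset.not_subset.1 hS
  unfold walshCoeff
  rw [div_eq_zero_iff]
  left
  set σ : (Fin n → Bit) → (Fin n → Bit) := fun x => Function.update x a (-(x a)) with hσ
  have hinv : ∀ x, σ (σ x) = x := by
    intro x; funext i
    by_cases h : i = a
    · subst h; simp [σ, Function.update]
    · simp [σ, Function.update, h]
  have hne : ∀ x, σ x ≠ x := by
    intro x h
    have h2 : σ x a = x a := congrFun h a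
    rw [hσ] at h2
    simp [Function.update] at h2
  have hGσ : ∀ x, G (σ x) = G x := by
    intro x
    apply hG
    intro b hb
    have : b ≠ a := fun h => haA (h ▸ hb)
    simp [σ, Function.update, this]
  have hχ : ∀ x, (∏ i ∈ S, ((σ x i : ℤ):ℝ)) = -∏ i ∈ S, ((x i : ℤ):ℝ) := by
    intro x
    rw [← Finset.mul_prod_erase S _ haS, ← Finset.mul_prod_erase S (fun i => ((x i:ℤ):ℝ)) haS]
    have h1 : ((σ x a : ℤ):ℝ) = -((x a : ℤ):ℝ) := by simp [σ, Function.update]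
    have h2 : ∀ i ∈ S.erase a, ((σ x i : ℤ):ℝ) = ((x i:ℤ):ℝ) := by
      intro i hi
      have : i ≠ a := Finset.ne_of_mem_erase hi
      simp [σ, Function.update, this]
    rw [h1, Finset.prod_congr rfl h2]
    ring
  apply Finset.sum_involution (fun x _ => σ x)
  · intro x _
    rw [hGσ, hχ]; ring
  · intro x _ _
    exact hne x
  · intro x _; exact Finset.mem_univ _
  · intro x _; exact hinv x

lemma walshCoeff_sum_smul {n : ℕ} {β : Type} (s : Finset β) (c : β → ℝ)
    (g : β → (Fin n → Bit) → ℝ) (S : Finset (Fin n)) :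
    walshCoeff (fun x => ∑ t ∈ s, c t * g t x) S = ∑ t ∈ s, c t * walshCoeff (g t) S := by
  unfold walshCoeff
  simp_rw [Finset.sum_mul]
  rw [Finset.sum_comm, Finset.sum_div]
  refine Finset.sum_congr rfl fun t _ => ?_
  simp_rw [mul_assoc, ← Finset.mul_sum, mul_div_assoc]

lemma pexp_prod_eq_of_marg_eq {N : ℕ} (p q : PMF (Fin N → Bit)) (U T : Finset (Fin N))
    (hTU : T ⊆ U) (hm : marg p U = marg q U) :
    pexp p (fun y => ∏ i ∈ T, ((y i : ℤ):ℝ)) = pexp q (fun y => ∏ i ∈ T, ((y i : ℤ):ℝ)) := by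
  have factor : ∀ y : Fin N → Bit,
      (∏ i ∈ T, ((y i : ℤ):ℝ))
        = ∏ j ∈ U.attach, (if (j : Fin N) ∈ T then (((y j.1) : ℤ):ℝ) else 1) := by
    intro y
    rw [Finset.prod_attach U (fun i => if i ∈ T then ((y i : ℤ):ℝ) else 1),
      ← Finset.prod_filter, Finset.filter_mem_eq_inter, (Finset.inter_eq_right).2 hTU]
  have e2 : ∀ r : PMF (Fin N → Bit),
      pexp r (fun y => ∏ i ∈ T, ((y i : ℤ):ℝ))
        = pexp (marg r U)
            (fun z => ∏ j ∈ U.attach, (if (j : Fin N) ∈ T then ((z j : ℤ):ℝ) else 1)) := by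
    intro r
    refine ((pexp_marg r U _).trans ?_).symm
    congr 1
    funext y
    exact (factor y).symm
  rw [e2 p, e2 q, hm]

end AuxNSC

/-- Degree does not increase under precomposition by a no-signaling channel: if
`f̂(T) = 0` for all `|T| > d`, then `F(x) := E_{y∼𝒩(x)}[f(y)]` satisfies `F̂(S) = 0`
for all `|S| > d`; that is, `deg(F) ≤ deg(f)`. -/
theorem nsc_degree_nonincreasing {n N : ℕ}
    (𝒩 : Channel (Fin n) (Fin N)) (B : Fin N → Option (Fin n))
    (hNS : NoSignaling 𝒩 B) (f : (Fin N → Bit) → ℝ) :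
    ∀ d : ℕ, (∀ T : Finset (Fin N), d < T.card → walshCoeff f T = 0) →
      ∀ S : Finset (Fin n), d < S.card →
        walshCoeff (fun x => pexp (𝒩 x) f) S = 0 := by
  intro d hd S hS
  set χ : Finset (Fin N) → (Fin N → Bit) → ℝ := fun T y => ∏ i ∈ T, ((y i : ℤ):ℝ) with hχ
  have hF : ∀ x, pexp (𝒩 x) f
      = ∑ T : Finset (Fin N), walshCoeff f T * pexp (𝒩 x) (χ T) := by
    intro x
    have : pexp (𝒩 x) f
        = pexp (𝒩 x) (fun y => ∑ T : Finset (Fin N), walshCoeff f T * χ T y) := by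
      congr 1
      funext y
      exact fourier_inv f y
    rw [this, pexp_sum]
    exact Finset.sum_congr rfl fun T _ => pexp_smul _ _ _
  have hrw : walshCoeff (fun x => pexp (𝒩 x) f) S
      = ∑ T : Finset (Fin N), walshCoeff f T * walshCoeff (fun x => pexp (𝒩 x) (χ T)) S := by
    rw [show (fun x => pexp (𝒩 x) f)
        = (fun x => ∑ T : Finset (Fin N), walshCoeff f T * pexp (𝒩 x) (χ T)) from funext hF]
    exact walshCoeff_sum_smul _ _ _ _
  rw [hrw]
  apply Finset.sum_eq_zero
  intro T _
  by_cases hT : d < T.card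
  · rw [hd T hT, zero_mul]
  · push_neg at hT
    -- the relevant input coordinates of `T`
    set A : Finset (Fin n) := T.biUnion (fun ℓ => (B ℓ).toFinset) with hA
    have hAcard : A.card ≤ T.card := by
      refine le_trans (Finset.card_biUnion_le) ?_
      calc (∑ ℓ ∈ T, (B ℓ).toFinset.card) ≤ ∑ _ℓ ∈ T, 1 := by
            refine Finset.sum_le_sum fun ℓ _ => ?_
            rcases B ℓ with _ | a <;> simp
        _ = T.card := by simp
    have hSA : ¬ S ⊆ A := by
      intro hsub
      have := Finset.card_le_card hsub
      omega
    have hTU : T ⊆ preim B A := by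
      intro ℓ hℓ
      simp only [preim, Finset.mem_filter, Finset.mem_univ, true_and]
      intro a hBa
      exact Finset.mem_biUnion.2 ⟨ℓ, hℓ, Option.mem_toFinset.2 (by rw [hBa]; rfl)⟩
    have hjunta : ∀ x x', (∀ a ∈ A, x a = x' a) →
        pexp (𝒩 x) (χ T) = pexp (𝒩 x') (χ T) := by
      intro x x' hagree
      exact pexp_prod_eq_of_marg_eq (𝒩 x) (𝒩 x') (preim B A) T hTU (hNS A x x' hagree)
    rw [junta_coeff_zero _ A S hjunta hSA, mul_zero]
end

section
/- Let (𝒩, B) be a no-signaling channel from n bits to N bits, let T, J ⊆ [N], and let x, x' ∈ {−1,1}^n agree on all coordinates in B(J ∪ T) \ {⊥}. Then 𝒩^J(x) = 𝒩^J(x'), and for every Y ∈ {−1,1}^J in the support of 𝒩^J(x), the reduced conditional channels agree: 𝒩^T(x | y_J = Y) = 𝒩^T(x' | y_J = Y). -/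
open scoped Classical ENNReal

noncomputable section

/-- Reduced conditional channel value: the marginal on `T` of `p` conditioned on the
event `y_J = Y`. -/
def condMarg {κ : Type} (p : PMF (κ → Bit)) (J T : Finset κ) (Y : {j // j ∈ J} → Bit)
    (h : Y ∈ (marg p J).support) : PMF ({i // i ∈ T} → Bit) :=
  marg (p.filter {y | ∀ j : {j // j ∈ J}, y j.1 = Y j} (by
    rw [marg, PMF.support_map] at h
    obtain ⟨y, hy, rfl⟩ := h
    exact ⟨y, fun j => rfl, hy⟩)) T

end

/-!
The no-signaling condition for `S = B(J ∪ T) ∖ {⊥}` makes the outputs of `x` and `x'` equal in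
distribution on `U = B⁻¹(S ∪ {⊥}) ⊇ J ∪ T`. Both the marginal on `J` and the conditional
marginal on `T` given `y_J = Y` are functions of the marginal on `U`: conditioning on an event
pulled back along a map commutes with pushing forward along that map.
-/

namespace PMF

variable {α β : Type*}

theorem toOuterMeasure_filter_apply (p : PMF α) (s : Set α) (h : ∃ a ∈ s, a ∈ p.support)
    (t : Set α) :
    (p.filter s h).toOuterMeasure t = p.toOuterMeasure (t ∩ s) * (p.toOuterMeasure s)⁻¹ := by
  rw [toOuterMeasure_apply, toOuterMeasure_apply, toOuterMeasure_apply, ← ENNReal.tsum_mul_right]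
  congr 1
  ext a
  by_cases ha : a ∈ t <;> by_cases hs : a ∈ s <;> simp [ha, hs, filter_apply]

theorem map_filter_preimage (p : PMF α) (f : α → β) (s : Set β)
    (h : ∃ a ∈ f ⁻¹' s, a ∈ p.support) (h' : ∃ b ∈ s, b ∈ (p.map f).support) :
    (p.filter (f ⁻¹' s) h).map f = (p.map f).filter s h' := by
  refine toOuterMeasure_injective (MeasureTheory.OuterMeasure.ext fun t => ?_)
  rw [toOuterMeasure_map_apply, toOuterMeasure_filter_apply, toOuterMeasure_filter_apply,
    toOuterMeasure_map_apply, toOuterMeasure_map_apply, Set.preimage_inter]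

end PMF

section Marginals

variable {κ : Type} {J T U : Finset κ}

theorem marg_eq_map_marg (p : PMF (κ → Bit)) (hTU : T ⊆ U) :
    marg p T = (marg p U).map (Finset.restrict₂ (π := fun _ => Bit) hTU) := by
  rw [marg, marg, PMF.map_comp]
  rfl

theorem marg_congr_of_subset {p q : PMF (κ → Bit)} (h : marg p U = marg q U) (hTU : T ⊆ U) :
    marg p T = marg q T := by
  rw [marg_eq_map_marg p hTU, marg_eq_map_marg q hTU, h]

theorem condMarg_eq_map_filter_marg (p : PMF (κ → Bit)) (hJU : J ⊆ U) (hTU : T ⊆ U)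
    (Y : {j // j ∈ J} → Bit) (hY : Y ∈ (marg p J).support)
    (hE : ∃ z ∈ {z : {i // i ∈ U} → Bit | ∀ j : {j // j ∈ J}, z ⟨j.1, hJU j.2⟩ = Y j},
      z ∈ (marg p U).support) :
    condMarg p J T Y hY =
      ((marg p U).filter {z | ∀ j : {j // j ∈ J}, z ⟨j.1, hJU j.2⟩ = Y j} hE).map
        (Finset.restrict₂ (π := fun _ => Bit) hTU) := by
  rw [condMarg, marg_eq_map_marg _ hTU, marg]
  congr 1
  exact PMF.map_filter_preimage p (fun y (i : {i // i ∈ U}) => y i.1) _ _ hE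

theorem condMarg_congr_of_subset {p q : PMF (κ → Bit)}
    (h : marg p U = marg q U) (hJU : J ⊆ U) (hTU : T ⊆ U)
    (Y : {j // j ∈ J} → Bit) (hY : Y ∈ (marg p J).support) (hY' : Y ∈ (marg q J).support) :
    condMarg p J T Y hY = condMarg q J T Y hY' := by
  have hE : ∃ z ∈ {z : {i // i ∈ U} → Bit | ∀ j : {j // j ∈ J}, z ⟨j.1, hJU j.2⟩ = Y j},
      z ∈ (marg p U).support := by
    rw [marg_eq_map_marg p hJU, PMF.mem_support_map_iff] at hY
    obtain ⟨z, hz, rfl⟩ := hY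
    exact ⟨z, fun j => rfl, hz⟩
  rw [condMarg_eq_map_filter_marg p hJU hTU Y hY hE,
    condMarg_eq_map_filter_marg q hJU hTU Y hY' (h ▸ hE)]
  congr 1
  simp only [h]

end Marginals

theorem NoSignaling.marg_eq_of_agree {ι κ : Type} [Fintype κ] {𝒩 : Channel ι κ} {B : κ → Option ι}
    (hNS : NoSignaling 𝒩 B) {U : Finset κ} {x x' : ι → Bit}
    (hagree : ∀ ℓ ∈ U, ∀ a, B ℓ = some a → x a = x' a) :
    marg (𝒩 x) U = marg (𝒩 x') U := by
  set S := U.biUnion fun ℓ => (B ℓ).toFinset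
  have hUS : U ⊆ preim B S := fun ℓ hℓ => by
    simpa [preim, S] using fun a ha => ⟨ℓ, hℓ, ha⟩
  refine marg_congr_of_subset (hNS S x x' fun a ha => ?_) hUS
  obtain ⟨ℓ, hℓ, ha⟩ := Finset.mem_biUnion.1 ha
  exact hagree ℓ hℓ a (Option.mem_toFinset.1 ha)

/-- (Proposition, Section 3.)  If `x` and `x'` agree on `B(J ∪ T) ∖ {⊥}`, then
`𝒩^J(x) = 𝒩^J(x')`, and for every `Y` in the support of `𝒩^J(x)` the reduced
conditional channels agree: `𝒩^T(x | y_J = Y) = 𝒩^T(x' | y_J = Y)`. -/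
theorem nsc_conditional_agree {n N : ℕ}
    (𝒩 : Channel (Fin n) (Fin N)) (B : Fin N → Option (Fin n))
    (hNS : NoSignaling 𝒩 B) (T J : Finset (Fin N)) (x x' : Fin n → Bit)
    (hagree : ∀ ℓ ∈ J ∪ T, ∀ a : Fin n, B ℓ = some a → x a = x' a) :
    marg (𝒩 x) J = marg (𝒩 x') J
    ∧ ∀ (Y : {j // j ∈ J} → Bit) (hY : Y ∈ (marg (𝒩 x) J).support)
        (hY' : Y ∈ (marg (𝒩 x') J).support),
        condMarg (𝒩 x) J T Y hY = condMarg (𝒩 x') J T Y hY' := by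
  have hJT := hNS.marg_eq_of_agree hagree
  exact ⟨marg_congr_of_subset hJT Finset.subset_union_left,
    condMarg_congr_of_subset hJT Finset.subset_union_left Finset.subset_union_right⟩
end

section
/- Let f : {−1,1}^N → {−1,1} be a Boolean function and let (𝒩, B) be a no-signaling channel from n bits to N bits. Then there exists a finitely supported probability distribution Γ over decision trees on the n input variables such that: (i) for every x ∈ {−1,1}^n and every b ∈ {−1,1}, Pr_{y∼𝒩(x)}[f(y) = b] = Pr_{τ∼Γ}[τ(x) = b]; and (ii) every decision tree τ in the support of Γ has depth(τ) ≤ DT_depth(f). -/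
open scoped Classical ENNReal

noncomputable section

/-- Decision trees on `n` (±1-valued) variables: a leaf outputs a fixed bit; an internal
node queries variable `i` and branches on whether `x i = 1` or `x i = -1`. -/
inductive DTree (n : ℕ) : Type where
  | leaf : Bit → DTree n
  | node : Fin n → DTree n → DTree n → DTree n

/-- Evaluation of a decision tree on an input. -/
def DTree.eval {n : ℕ} : DTree n → (Fin n → Bit) → Bit
  | .leaf b, _ => b
  | .node i t e, x => if x i = 1 then t.eval x else e.eval x

/-- Depth of a decision tree. -/
def DTree.depth {n : ℕ} : DTree n → ℕ
  | .leaf _ => 0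
  | .node _ t e => max t.depth e.depth + 1

/-- Decision-tree depth of a Boolean function: the least depth of a decision tree
computing it exactly. -/
def DTdepth {N : ℕ} (f : (Fin N → Bit) → Bit) : ℕ :=
  sInf {d | ∃ τ : DTree N, τ.depth ≤ d ∧ ∀ y, τ.eval y = f y}

end

/-!
Expand `f ∘ 𝒩` along an optimal decision tree for `f`, replacing the channel by a nonnegative
weight function `μ x y` whose marginals on `B⁻¹(S ∪ {⊥})` depend only on `x` restricted to `S`.
A query of an output bit `ℓ` with `B ℓ = ⊥` splits `μ` according to `y ℓ`; both halves are still
no-signaling, so no input is queried. A query of an output bit `ℓ` with `B ℓ = a` becomes a query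
of the input `a`: once `x a = v` is fixed, every output assigned to `a` may be reassigned to `⊥`.
The two mixtures obtained for `v = ±1` have the same mass `m` (no-signaling with `S = ∅`), and are
coupled independently, with weights `w₁ i * w₂ j / m`. Each output query thus costs at most one
input query.
-/

open Finset

variable {n N : ℕ}

lemma PMF.sum_comp_mul_eq_sum_mul_map {α β : Type*} [Fintype α] [Fintype β] (p : PMF α)
    (f : α → β) (g : β → ℝ≥0∞) : ∑ a, g (f a) * p a = ∑ b, g b * p.map f b := by
  simp only [PMF.map_apply, tsum_fintype, Finset.mul_sum, mul_ite, mul_zero]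
  rw [Finset.sum_comm]
  simp

lemma DTree.exists_eval_eq_of_dependsOn (s : Finset (Fin N)) {f : (Fin N → Bit) → Bit}
    (hf : DependsOn f s) : ∃ τ : DTree N, ∀ y, τ.eval y = f y := by
  induction s using Finset.induction_on generalizing f with
  | empty => exact ⟨.leaf (f 1), fun y => hf (by simp)⟩
  | insert i s _ ih =>
    have hfix : ∀ v, DependsOn (fun y => f (Function.update y i v)) s := fun v y y' hyy' =>
      hf fun j hj => by
        rcases eq_or_ne j i with rfl | hji
        · simp
        · simpa [hji] using hyy' j (by simpa [hji] using hj)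
    obtain ⟨τ₁, h₁⟩ := ih (hfix 1)
    obtain ⟨τ₂, h₂⟩ := ih (hfix (-1))
    refine ⟨.node i τ₁ τ₂, fun y => ?_⟩
    rcases Int.units_eq_one_or (y i) with hy | hy
    · rw [DTree.eval, if_pos hy, h₁, ← hy, Function.update_eq_self]
    · rw [DTree.eval, if_neg (by rw [hy]; decide), h₂, ← hy, Function.update_eq_self]

lemma exists_dtree_depth_le_DTdepth (f : (Fin N → Bit) → Bit) :
    ∃ τ : DTree N, τ.depth ≤ DTdepth f ∧ ∀ y, τ.eval y = f y := by
  obtain ⟨τ, hτ⟩ := DTree.exists_eval_eq_of_dependsOn univ (by simpa using dependsOn_univ f)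
  have hne : {d | ∃ τ : DTree N, τ.depth ≤ d ∧ ∀ y, τ.eval y = f y}.Nonempty :=
    ⟨τ.depth, τ, le_rfl, hτ⟩
  exact Nat.sInf_mem hne

def unassign (B : Fin N → Option (Fin n)) (a : Fin n) : Fin N → Option (Fin n) :=
  fun ℓ => if B ℓ = some a then none else B ℓ

lemma mem_preim_of_eq_none {B : Fin N → Option (Fin n)} {ℓ : Fin N} (hB : B ℓ = none)
    (S : Finset (Fin n)) : ℓ ∈ preim B S := by
  simp [preim, hB]

lemma preim_unassign (B : Fin N → Option (Fin n)) (a : Fin n) (S : Finset (Fin n)) :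
    preim (unassign B a) S = preim B (insert a S) := by
  ext ℓ
  by_cases hℓ : B ℓ = some a
  · simp [preim, unassign, hℓ]
  · simp only [preim, unassign, Option.ite_none_left_eq_some, and_imp, mem_filter, mem_univ, hℓ,
      not_false_eq_true, forall_const, true_and, mem_insert]
    refine forall_congr' fun c => imp_congr_right fun hc => ⟨Or.inr, fun h => ?_⟩
    exact h.resolve_left (by rintro rfl; exact hℓ hc)

def IsNoSignalingWeight (B : Fin N → Option (Fin n))
    (μ : (Fin n → Bit) → (Fin N → Bit) → ℝ≥0∞) : Prop :=
  ∀ (S : Finset (Fin n)) (x x' : Fin n → Bit), (∀ a ∈ S, x a = x' a) →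
    ∀ F : (Fin N → Bit) → ℝ≥0∞, DependsOn F (preim B S) →
      ∑ y, F y * μ x y = ∑ y, F y * μ x' y

lemma NoSignaling.isNoSignalingWeight {𝒩 : Channel (Fin n) (Fin N)}
    {B : Fin N → Option (Fin n)} (h : NoSignaling 𝒩 B) :
    IsNoSignalingWeight B fun x y => 𝒩 x y := by
  intro S x x' hxx F hF
  obtain ⟨g, rfl⟩ := dependsOn_iff_exists_comp.1 hF
  have hmarg : (𝒩 x).map (Set.domRestrict (preim B S))
      = (𝒩 x').map (Set.domRestrict (preim B S)) := h S x x' hxx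
  simp only [Function.comp_apply]
  rw [PMF.sum_comp_mul_eq_sum_mul_map (𝒩 x), PMF.sum_comp_mul_eq_sum_mul_map (𝒩 x'), hmarg]

namespace IsNoSignalingWeight

variable {B : Fin N → Option (Fin n)} {μ : (Fin n → Bit) → (Fin N → Bit) → ℝ≥0∞}

lemma sum_eq (h : IsNoSignalingWeight B μ) (x x' : Fin n → Bit) :
    ∑ y, μ x y = ∑ y, μ x' y := by
  simpa using h ∅ x x' (by simp) (fun _ => 1)
    ((dependsOn_const 1).mono (Set.empty_subset _))

lemma ite {ℓ : Fin N} (h : IsNoSignalingWeight B μ) (hB : B ℓ = none) (p : Bit → Prop) :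
    IsNoSignalingWeight B fun x y => if p (y ℓ) then μ x y else 0 := by
  intro S x x' hxx F hF
  have hF' : DependsOn (fun y => if p (y ℓ) then F y else 0) (preim B S) := fun y y' hyy' => by
    simp only [hyy' ℓ (mem_preim_of_eq_none hB S), hF hyy']
  simpa only [mul_ite, ite_mul, mul_zero, zero_mul] using h S x x' hxx _ hF'

lemma comp_update (h : IsNoSignalingWeight B μ) (a : Fin n) (v : Bit) :
    IsNoSignalingWeight (unassign B a) fun x => μ (Function.update x a v) := by
  intro S x x' hxx F hF
  refine h (insert a S) _ _ (fun c hc => ?_) F (by simpa [preim_unassign] using hF)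
  rcases eq_or_ne c a with rfl | hca
  · simp
  · simpa [hca] using hxx c ((mem_insert.1 hc).resolve_left hca)

end IsNoSignalingWeight

structure TreeMixture (n : ℕ) : Type 1 where
  ι : Type
  [instFintype : Fintype ι]
  tree : ι → DTree n
  weight : ι → ℝ≥0∞

attribute [instance] TreeMixture.instFintype

noncomputable section

namespace TreeMixture

variable (M M₁ M₂ : TreeMixture n)

def mass : ℝ≥0∞ := ∑ i, M.weight i

def outcome (x : Fin n → Bit) (b : Bit) : ℝ≥0∞ :=
  ∑ i, if (M.tree i).eval x = b then M.weight i else 0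

def leaf (c : Bit) (m : ℝ≥0∞) : TreeMixture n := ⟨Unit, fun _ => .leaf c, fun _ => m⟩

instance : Add (TreeMixture n) :=
  ⟨fun M₁ M₂ => ⟨M₁.ι ⊕ M₂.ι, Sum.elim M₁.tree M₂.tree, Sum.elim M₁.weight M₂.weight⟩⟩

/-- Query `x a`, then follow an independent sample of `M₁` or of `M₂`. The normalization by
`M₁.mass` makes both marginals right when `M₁.mass = M₂.mass`. -/
def query (a : Fin n) : TreeMixture n :=
  ⟨M₁.ι × M₂.ι, fun p => .node a (M₁.tree p.1) (M₂.tree p.2),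
    fun p => M₁.weight p.1 * M₂.weight p.2 / M₁.mass⟩

lemma sum_outcome (x : Fin n → Bit) : ∑ b, M.outcome x b = M.mass := by
  simp only [outcome, mass]
  rw [Finset.sum_comm]
  simp only [Finset.sum_ite_eq, mem_univ, if_true]

lemma outcome_leaf (c : Bit) (m : ℝ≥0∞) (x : Fin n → Bit) (b : Bit) :
    (leaf c m).outcome x b = if c = b then m else 0 := by
  dsimp only [outcome, leaf, DTree.eval]
  rw [Fintype.sum_unique]
  congr

lemma outcome_add (x : Fin n → Bit) (b : Bit) :
    (M₁ + M₂).outcome x b = M₁.outcome x b + M₂.outcome x b :=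
  Fintype.sum_sum_type _

lemma weight_mul_mass_div_mass (hfin : M.mass ≠ ⊤) (i : M.ι) :
    M.weight i * M.mass / M.mass = M.weight i :=
  ENNReal.mul_div_cancel_right' (fun h0 => Finset.sum_eq_zero_iff.1 h0 i (mem_univ i))
    (fun htop => absurd htop hfin)

variable {M₁ M₂}

lemma outcome_query (hmass : M₂.mass = M₁.mass) (hfin : M₁.mass ≠ ⊤) (a : Fin n)
    (x : Fin n → Bit) (b : Bit) :
    (M₁.query M₂ a).outcome x b = if x a = 1 then M₁.outcome x b else M₂.outcome x b := by
  have hleft : ∀ i, ∑ j, M₁.weight i * M₂.weight j / M₁.mass = M₁.weight i := fun i => by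
    simp only [div_eq_mul_inv, ← Finset.sum_mul, ← Finset.mul_sum]
    have h₂ : ∑ j, M₂.weight j = M₁.mass := hmass
    rw [← div_eq_mul_inv, h₂]
    exact M₁.weight_mul_mass_div_mass hfin i
  have hright : ∀ j, ∑ i, M₁.weight i * M₂.weight j / M₁.mass = M₂.weight j := fun j => by
    simp only [div_eq_mul_inv, ← Finset.sum_mul]
    have h₁ : ∑ i, M₁.weight i = M₂.mass := hmass.symm
    rw [← div_eq_mul_inv, mul_comm, h₁, ← hmass]
    exact M₂.weight_mul_mass_div_mass (hmass ▸ hfin) j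
  dsimp only [outcome, query]
  rw [Fintype.sum_prod_type]
  by_cases hx : x a = 1
  · simp only [DTree.eval, hx, if_true]
    refine Finset.sum_congr rfl fun i _ => ?_
    split_ifs
    · exact hleft i
    · simp
  · simp only [DTree.eval, hx, if_false]
    rw [Finset.sum_comm]
    refine Finset.sum_congr rfl fun j _ => ?_
    split_ifs
    · exact hright j
    · simp

end TreeMixture

end

section Decomposition

def TreeMixture.Realizes (M : TreeMixture n) (T : DTree N)
    (μ : (Fin n → Bit) → (Fin N → Bit) → ℝ≥0∞) : Prop :=
  ∀ x b, (∑ y, if T.eval y = b then μ x y else 0) = M.outcome x b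

lemma TreeMixture.Realizes.mass_eq {M : TreeMixture n} {T : DTree N}
    {μ : (Fin n → Bit) → (Fin N → Bit) → ℝ≥0∞} (h : M.Realizes T μ) (x : Fin n → Bit) :
    M.mass = ∑ y, μ x y := by
  simp only [← M.sum_outcome x, ← h x]
  rw [Finset.sum_comm]
  simp only [Finset.sum_ite_eq, mem_univ, if_true]

variable (n) in
def Decomposable (T : DTree N) (d : ℕ) : Prop :=
  ∀ (B : Fin N → Option (Fin n)) (μ : (Fin n → Bit) → (Fin N → Bit) → ℝ≥0∞),
    IsNoSignalingWeight B μ → (∀ x y, μ x y ≠ ⊤) →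
      ∃ M : TreeMixture n, (∀ i, (M.tree i).depth ≤ d) ∧ M.Realizes T μ

lemma decomposable_leaf (c : Bit) : Decomposable n (.leaf c : DTree N) 0 := by
  intro B μ h _
  refine ⟨.leaf c (∑ y, μ 1 y), fun _ => le_rfl, fun x b => ?_⟩
  rw [TreeMixture.outcome_leaf, h.sum_eq 1 x]
  by_cases hc : c = b <;> simp [DTree.eval, hc]

variable {ℓ : Fin N} {t e : DTree N} {dt de : ℕ} {B : Fin N → Option (Fin n)}
  {μ : (Fin n → Bit) → (Fin N → Bit) → ℝ≥0∞}

lemma exists_mixture_node_of_eq_none (ht : Decomposable n t dt) (he : Decomposable n e de)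
    (hB : B ℓ = none) (h : IsNoSignalingWeight B μ) (hfin : ∀ x y, μ x y ≠ ⊤) :
    ∃ M : TreeMixture n, (∀ i, (M.tree i).depth ≤ max dt de) ∧ M.Realizes (.node ℓ t e) μ := by
  have hfin_ite : ∀ (p : Bit → Prop) x y, (if p (y ℓ) then μ x y else 0) ≠ ⊤ := fun p x y => by
    split_ifs
    exacts [hfin x y, ENNReal.zero_ne_top]
  obtain ⟨M₁, hd₁, hM₁⟩ := ht B _ (h.ite hB (· = 1)) (hfin_ite (· = 1))
  obtain ⟨M₂, hd₂, hM₂⟩ := he B _ (h.ite hB (¬ · = 1)) (hfin_ite (¬ · = 1))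
  refine ⟨M₁ + M₂, ?_, fun x b => ?_⟩
  · rintro (i | i)
    exacts [(hd₁ i).trans (le_max_left _ _), (hd₂ i).trans (le_max_right _ _)]
  · rw [TreeMixture.outcome_add, ← hM₁, ← hM₂, ← Finset.sum_add_distrib]
    refine Finset.sum_congr rfl fun y _ => ?_
    by_cases hy : y ℓ = 1 <;> simp [DTree.eval, hy]

lemma exists_mixture_node_of_eq_some {a : Fin n} (ht : Decomposable n t dt)
    (he : Decomposable n e de) (hB : B ℓ = some a) (h : IsNoSignalingWeight B μ)
    (hfin : ∀ x y, μ x y ≠ ⊤) :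
    ∃ M : TreeMixture n, (∀ i, (M.tree i).depth ≤ max dt de + 1) ∧
      M.Realizes (.node ℓ t e) μ := by
  have hB' : unassign B a ℓ = none := by simp [unassign, hB]
  obtain ⟨M₁, hd₁, hM₁⟩ :=
    exists_mixture_node_of_eq_none ht he hB' (h.comp_update a 1) fun x => hfin _
  obtain ⟨M₂, hd₂, hM₂⟩ :=
    exists_mixture_node_of_eq_none ht he hB' (h.comp_update a (-1)) fun x => hfin _
  have hmass : M₂.mass = M₁.mass := by
    rw [hM₂.mass_eq 1, hM₁.mass_eq 1]
    exact h.sum_eq _ _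
  have hfin_mass : M₁.mass ≠ ⊤ := by
    rw [hM₁.mass_eq 1]
    exact ENNReal.sum_ne_top.2 fun y _ => hfin _ y
  refine ⟨M₁.query M₂ a, fun p => Nat.succ_le_succ (max_le (hd₁ p.1) (hd₂ p.2)), fun x b => ?_⟩
  rw [TreeMixture.outcome_query hmass hfin_mass, ← hM₁ x b, ← hM₂ x b]
  rcases Int.units_eq_one_or (x a) with hx | hx
  · rw [if_pos hx, ← hx]
    simp only [Function.update_eq_self]
  · rw [if_neg (by rw [hx]; decide), ← hx]
    simp only [Function.update_eq_self]

lemma decomposable_node (ℓ : Fin N) (ht : Decomposable n t dt) (he : Decomposable n e de) :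
    Decomposable n (.node ℓ t e) (max dt de + 1) := by
  intro B μ h hfin
  cases hB : B ℓ with
  | none =>
    obtain ⟨M, hd, hM⟩ := exists_mixture_node_of_eq_none ht he hB h hfin
    exact ⟨M, fun i => (hd i).trans (Nat.le_succ _), hM⟩
  | some a => exact exists_mixture_node_of_eq_some ht he hB h hfin

lemma decomposable (T : DTree N) : Decomposable n T T.depth := by
  induction T with
  | leaf c => exact decomposable_leaf c
  | node ℓ t e ht he => exact decomposable_node ℓ ht he

end Decomposition

/-- (Theorem 4, decision tree decomposition.)  For any Boolean `f` and no-signaling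
channel `(𝒩, B)` from `n` bits to `N` bits, the randomized function `f ∘ 𝒩` is equal to
a finitely supported distribution `Γ` over decision trees on the `n` input variables —
`Pr_{y∼𝒩(x)}[f(y) = b] = Pr_{τ∼Γ}[τ(x) = b]` for all `x, b` — all of whose trees have
depth at most `DT_depth(f)`. -/
theorem nsc_tree_decomposition {n N : ℕ} (f : (Fin N → Bit) → Bit)
    (𝒩 : Channel (Fin n) (Fin N)) (B : Fin N → Option (Fin n))
    (hNS : NoSignaling 𝒩 B) :
    ∃ (k : ℕ) (ts : Fin k → DTree n) (w : Fin k → ℝ≥0∞),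
      (∑ i, w i) = 1
      ∧ (∀ i, (ts i).depth ≤ DTdepth f)
      ∧ ∀ (x : Fin n → Bit) (b : Bit),
          (∑ y : Fin N → Bit, if f y = b then 𝒩 x y else 0)
            = ∑ i, if (ts i).eval x = b then w i else 0 := by
  obtain ⟨τ, hτ_depth, hτ_eval⟩ := exists_dtree_depth_le_DTdepth f
  obtain ⟨M, hM_depth, hM⟩ := decomposable τ B (fun x y => 𝒩 x y) hNS.isNoSignalingWeight
    fun x y => PMF.apply_ne_top _ _
  let e := Fintype.equivFin M.ι
  refine ⟨Fintype.card M.ι, M.tree ∘ e.symm, M.weight ∘ e.symm, ?_,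
    fun i => (hM_depth _).trans hτ_depth, fun x b => ?_⟩
  · rw [Function.comp_def, e.symm.sum_comp M.weight, ← TreeMixture.mass, hM.mass_eq 1]
    exact (tsum_fintype _).symm.trans (𝒩 1).tsum_coe
  · simp only [← hτ_eval, hM x b, TreeMixture.outcome, Function.comp_apply]
    exact (e.symm.sum_comp fun i => if (M.tree i).eval x = b then M.weight i else 0).symm
end
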